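/- Let β > 1, K₁ > 0, K₂ > 0, D_max > 0 with K₂ > D_max, and let d : ℝ → ℝ satisfy |d(t)| ≤ D_max for all t. Let x₁, x₂ be differentiable at a time t with x₁(t) ≠ 0 and z₂(t) ≠ 0, where z₂ = x₂ + K₁·sign(x₁)·|x₁|^(|x₁|^β), satisfying ẋ₁(t) = x₂(t), ẋ₂(t) = u(t) + d(t) with u = −K₂·sign(z₂) − ( x₁ + K₁·|x₁|^(|x₁|^β + β − 1)·(1 + β·ln|x₁|)·(−K₁·sign(x₁)·|x₁|^(|x₁|^β) + z₂) ). Then V₂ = x₁²/2 + z₂²/2 is differentiable at t with V̇₂(t) = −K₁·|x₁(t)|^(1 + |x₁(t)|^β) + z₂(t)·(−K₂·sign(z₂(t)) + d(t)), and consequently V̇₂(t) ≤ −K₁·|x₁(t)|^(1 + |x₁(t)|^β) − (K₂ − D_max)·|z₂(t)| < 0. -/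

import Mathlib

/-!
The virtual control `-K₁⌈x₁⌋^(|x₁|^β)` is differentiable away from `x₁ = 0`, with derivative
`-K₁|x₁|^(|x₁|^β+β-1) (1 + β ln|x₁|)`; the control `u` is built to cancel exactly this term in
`ż₂`, so that `ż₂ = -K₂ sign z₂ - x₁ + d`. In `V̇₂ = x₁ẋ₁ + z₂ż₂` the cross terms `± x₁z₂` then
cancel, and since `K₂ > D_max` the term `-K₂|z₂|` dominates the perturbation `z₂ d`.
-/

open Real

theorem Real.sign_eq_sign (r : ℝ) : Real.sign r = (SignType.sign r : ℝ) := by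
  rcases lt_trichotomy r 0 with hr | rfl | hr
  · simp [Real.sign_of_neg hr, hr]
  · simp [Real.sign_zero]
  · simp [Real.sign_of_pos hr, hr]

theorem Real.self_mul_sign (r : ℝ) : r * Real.sign r = |r| := by
  rw [Real.sign_eq_sign, _root_.self_mul_sign]

theorem Real.sign_mul_self_of_ne_zero {r : ℝ} (hr : r ≠ 0) : Real.sign r * Real.sign r = 1 := by
  rcases Real.sign_apply_eq_of_ne_zero r hr with h | h <;> rw [h] <;> norm_num

theorem hasDerivAt_rpow_self_rpow (β : ℝ) {u : ℝ} (hu : 0 < u) :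
    HasDerivAt (fun v : ℝ => v ^ v ^ β) (u ^ (u ^ β + β - 1) * (1 + β * log u)) u := by
  refine ((hasDerivAt_id' u).rpow (hasDerivAt_rpow_const (p := β) (Or.inl hu.ne')) hu
    ).congr_deriv ?_
  have hsplit : u ^ (u ^ β + β - 1) = u ^ (u ^ β) * u ^ (β - 1) := by
    rw [← rpow_add hu]; ring_nf
  have hsplit' : u ^ (u ^ β + β - 1) = u ^ β * u ^ (u ^ β - 1) := by
    rw [← rpow_add hu]; ring_nf
  linear_combination -hsplit' - β * log u * hsplit

theorem hasDerivAt_sign_mul_abs_rpow_abs_rpow (β : ℝ) {y : ℝ} (hy : y ≠ 0) :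
    HasDerivAt (fun z : ℝ => Real.sign z * |z| ^ |z| ^ β)
      (|y| ^ (|y| ^ β + β - 1) * (1 + β * log |y|)) y := by
  have habs := (hasDerivAt_rpow_self_rpow β (abs_pos.mpr hy)).comp y (hasDerivAt_abs hy)
  have hsign : (fun z : ℝ => Real.sign z * |z| ^ |z| ^ β) =ᶠ[nhds y]
      fun z => Real.sign y * |z| ^ |z| ^ β := by
    rcases hy.lt_or_gt with hneg | hpos
    · filter_upwards [eventually_lt_nhds hneg] with z hz
      rw [Real.sign_of_neg hz, Real.sign_of_neg hneg]
    · filter_upwards [eventually_gt_nhds hpos] with z hz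
      rw [Real.sign_of_pos hz, Real.sign_of_pos hpos]
  refine ((habs.const_mul (Real.sign y)).congr_of_eventuallyEq hsign).congr_deriv ?_
  rw [← Real.sign_eq_sign, mul_comm, mul_assoc, Real.sign_mul_self_of_ne_zero hy, mul_one]

theorem mul_neg_mul_sign_add_le {K D z d : ℝ} (hd : |d| ≤ D) :
    z * (-K * Real.sign z + d) ≤ -K * |z| + D * |z| := by
  have hzd : z * d ≤ D * |z| :=
    calc z * d ≤ |z * d| := le_abs_self _
      _ = |z| * |d| := abs_mul z d
      _ ≤ |z| * D := mul_le_mul_of_nonneg_left hd (abs_nonneg z)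
      _ = D * |z| := mul_comm _ _
  have hsign := Real.self_mul_sign z
  linear_combination hzd - K * hsign

theorem powerTower_V2_deriv_perturbed_general (β K₁ K₂ Dmax : ℝ)
    (hK₁ : 0 < K₁) (hKD : Dmax < K₂)
    (d : ℝ → ℝ) (hd : ∀ t, |d t| ≤ Dmax)
    (x₁ x₂ : ℝ → ℝ) (t x₁' x₂' : ℝ)
    (hx₁ : HasDerivAt x₁ x₁' t) (hx₂ : HasDerivAt x₂ x₂' t)
    (z₂ : ℝ → ℝ)
    (hz₂ : z₂ = fun s : ℝ => x₂ s + K₁ * Real.sign (x₁ s) * |x₁ s| ^ (|x₁ s| ^ β))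
    (hne1 : x₁ t ≠ 0) (hne2 : z₂ t ≠ 0)
    (h1 : x₁' = x₂ t)
    (h2 : x₂' = (-K₂ * Real.sign (z₂ t) -
      (x₁ t + K₁ * |x₁ t| ^ (|x₁ t| ^ β + β - 1) * (1 + β * Real.log |x₁ t|) *
        (-K₁ * Real.sign (x₁ t) * |x₁ t| ^ (|x₁ t| ^ β) + z₂ t))) + d t) :
    HasDerivAt (fun s : ℝ => x₁ s ^ 2 / 2 + z₂ s ^ 2 / 2)
      (-K₁ * |x₁ t| ^ (1 + |x₁ t| ^ β) + z₂ t * (-K₂ * Real.sign (z₂ t) + d t)) t ∧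
    -K₁ * |x₁ t| ^ (1 + |x₁ t| ^ β) + z₂ t * (-K₂ * Real.sign (z₂ t) + d t) ≤
      -K₁ * |x₁ t| ^ (1 + |x₁ t| ^ β) - (K₂ - Dmax) * |z₂ t| ∧
    -K₁ * |x₁ t| ^ (1 + |x₁ t| ^ β) - (K₂ - Dmax) * |z₂ t| < 0 := by
  have hz₂t : z₂ t = x₂ t + K₁ * Real.sign (x₁ t) * |x₁ t| ^ (|x₁ t| ^ β) := by rw [hz₂]
  have hz₂' : HasDerivAt z₂ (-K₂ * Real.sign (z₂ t) - x₁ t + d t) t := by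
    have htower := (hasDerivAt_sign_mul_abs_rpow_abs_rpow β hne1).comp t hx₁
    have hz₂_eq : z₂ = fun s => x₂ s + K₁ * (fun z => Real.sign z * |z| ^ |z| ^ β) (x₁ s) := by
      simp only [hz₂, mul_assoc]
    refine ((hx₂.add (htower.const_mul K₁)).congr_of_eventuallyEq
      (.of_forall (congrFun hz₂_eq))).congr_deriv ?_
    rw [h2, h1, hz₂t]
    ring
  have hpow : |x₁ t| ^ (1 + |x₁ t| ^ β) = |x₁ t| * |x₁ t| ^ (|x₁ t| ^ β) := by
    rw [rpow_add (abs_pos.mpr hne1), rpow_one]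
  refine ⟨?_, ?_, ?_⟩
  · refine (((hx₁.pow 2).div_const 2).add ((hz₂'.pow 2).div_const 2)).congr_deriv ?_
    rw [hpow, h1]
    linear_combination
      -x₁ t * hz₂t - K₁ * |x₁ t| ^ |x₁ t| ^ β * Real.self_mul_sign (x₁ t)
  · linear_combination mul_neg_mul_sign_add_le (K := K₂) (z := z₂ t) (hd t)
  · have hx₁pos : 0 < |x₁ t| ^ (1 + |x₁ t| ^ β) := rpow_pos_of_pos (abs_pos.mpr hne1) _
    have hz₂pos : 0 < |z₂ t| := abs_pos.mpr hne2
    linarith [mul_pos hK₁ hx₁pos, mul_pos (sub_pos.mpr hKD) hz₂pos]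

/-- Corollary 1 (Lyapunov computation with bounded perturbation): under the
sign-based power tower backstepping control with K₂ > D_max, V₂ = x₁²/2 + z₂²/2
satisfies V̇₂ = −K₁·|x₁|^(1+|x₁|^β) + z₂·(−K₂·sign(z₂) + d)
≤ −K₁·|x₁|^(1+|x₁|^β) − (K₂ − D_max)·|z₂| < 0. -/
theorem powerTower_V2_deriv_perturbed (β K₁ K₂ Dmax : ℝ) (hβ : 1 < β)
    (hK₁ : 0 < K₁) (hK₂ : 0 < K₂) (hD : 0 < Dmax) (hKD : Dmax < K₂)
    (d : ℝ → ℝ) (hd : ∀ t, |d t| ≤ Dmax)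
    (x₁ x₂ : ℝ → ℝ) (t x₁' x₂' : ℝ)
    (hx₁ : HasDerivAt x₁ x₁' t) (hx₂ : HasDerivAt x₂ x₂' t)
    (z₂ : ℝ → ℝ)
    (hz₂ : z₂ = fun s : ℝ => x₂ s + K₁ * Real.sign (x₁ s) * |x₁ s| ^ (|x₁ s| ^ β))
    (hne1 : x₁ t ≠ 0) (hne2 : z₂ t ≠ 0)
    (h1 : x₁' = x₂ t)
    (h2 : x₂' = (-K₂ * Real.sign (z₂ t) -
      (x₁ t + K₁ * |x₁ t| ^ (|x₁ t| ^ β + β - 1) * (1 + β * Real.log |x₁ t|) *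
        (-K₁ * Real.sign (x₁ t) * |x₁ t| ^ (|x₁ t| ^ β) + z₂ t))) + d t) :
    HasDerivAt (fun s : ℝ => x₁ s ^ 2 / 2 + z₂ s ^ 2 / 2)
      (-K₁ * |x₁ t| ^ (1 + |x₁ t| ^ β) + z₂ t * (-K₂ * Real.sign (z₂ t) + d t)) t ∧
    -K₁ * |x₁ t| ^ (1 + |x₁ t| ^ β) + z₂ t * (-K₂ * Real.sign (z₂ t) + d t) ≤
      -K₁ * |x₁ t| ^ (1 + |x₁ t| ^ β) - (K₂ - Dmax) * |z₂ t| ∧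
    -K₁ * |x₁ t| ^ (1 + |x₁ t| ^ β) - (K₂ - Dmax) * |z₂ t| < 0 :=
  powerTower_V2_deriv_perturbed_general β K₁ K₂ Dmax hK₁ hKD d hd x₁ x₂ t x₁' x₂' hx₁ hx₂ z₂ hz₂
    hne1 hne2 h1 h2
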